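/- arXiv:1203.4779 — 2 statements merged into one kernel-verified Lean document; each statement's English description precedes it below -/
import Mathlib

section
/- Let Λ be a measurable space, N a natural number, and μ : Fin N → Measure Λ a family of probability measures on Λ. Let R : Fin N → Λ → ℝ be a family of measurable functions such that 0 ≤ R j λ for all j and λ, such that ∑_{j} R j λ = 1 for every λ ∈ Λ, and such that ∫ R j dμ_j = 0 for every j. Then every measure ν on Λ that is absolutely continuous with respect to μ_j for every j : Fin N is the zero measure. -/
/-!
Each response function `R j` lies in `[0, 1]`, so it is `μ j`-integrable and the Born rule
`∫ R j dμ_j = 0` forces `R j = 0` `μ_j`-almost everywhere, hence `ν`-almost everywhere.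
Then `ν`-almost every `λ` has `∑ j, R j λ = 0 ≠ 1`, so `ν` is the zero measure.
-/

open MeasureTheory

namespace MeasureTheory

variable {Λ : Type*} [MeasurableSpace Λ]

theorem ae_eq_zero_of_integral_eq_zero_of_nonneg_of_le {μ : Measure Λ} [IsFiniteMeasure μ]
    {f : Λ → ℝ} (hf : AEStronglyMeasurable f μ) (hf_nonneg : 0 ≤ᵐ[μ] f) {C : ℝ}
    (hf_le : ∀ᵐ x ∂μ, f x ≤ C) (hf_int : ∫ x, f x ∂μ = 0) : f =ᵐ[μ] 0 := by
  have hbound : ∀ᵐ x ∂μ, ‖f x‖ ≤ C := by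
    filter_upwards [hf_nonneg, hf_le] with x h0 hC
    rwa [Real.norm_of_nonneg h0]
  exact (integral_eq_zero_iff_of_nonneg_ae hf_nonneg (.of_bound hf C hbound)).mp hf_int

theorem Measure.eq_zero_of_ae_eq_zero_of_sum_eq_one {ι M : Type*} [Fintype ι] [AddCommMonoid M]
    [One M] [NeZero (1 : M)] {ν : Measure Λ} {R : ι → Λ → M}
    (hR_sum : ∀ x, ∑ j, R j x = 1) (hR : ∀ j, R j =ᵐ[ν] 0) : ν = 0 := by
  have hfalse : ∀ᵐ x ∂ν, False := by
    filter_upwards [ae_all_iff.mpr hR] with x hx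
    simpa [hx] using hR_sum x
  simpa using hfalse

end MeasureTheory

/-- Measure-theoretic core of the PBR lemma: if the state-independent response
functions `R j` are nonnegative, sum to one pointwise, and integrate to zero
against the corresponding distributions `μ j`, then no nonzero measure can be
absolutely continuous with respect to all `μ j`. -/
theorem pbr_core {Λ : Type*} [MeasurableSpace Λ] (N : ℕ)
    (μ : Fin N → Measure Λ) (hμ : ∀ j, IsProbabilityMeasure (μ j))
    (R : Fin N → Λ → ℝ) (hRmeas : ∀ j, Measurable (R j))
    (hRnonneg : ∀ j, ∀ lam : Λ, 0 ≤ R j lam)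
    (hRsum : ∀ lam : Λ, ∑ j, R j lam = 1)
    (hBorn : ∀ j, ∫ lam, R j lam ∂(μ j) = 0) :
    ∀ ν : Measure Λ, (∀ j, ν ≪ μ j) → ν = 0 := by
  intro ν hν
  refine Measure.eq_zero_of_ae_eq_zero_of_sum_eq_one hRsum fun j => (hν j).ae_eq ?_
  have hR_le_one : ∀ lam, R j lam ≤ 1 := fun lam =>
    hRsum lam ▸ Finset.single_le_sum (fun k _ => hRnonneg k lam) (Finset.mem_univ j)
  exact ae_eq_zero_of_integral_eq_zero_of_nonneg_of_le (hRmeas j).aestronglyMeasurable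
    (.of_forall (hRnonneg j)) (.of_forall hR_le_one) (hBorn j)
end

section
/- Let Λ be a topological space equipped with its Borel σ-algebra, N a natural number, and μ : Fin N → Measure Λ a family of probability measures. Let R : Fin N → Λ → ℝ be a family of continuous functions with 0 ≤ R j λ for all j and λ, with ∑_{j} R j λ = 1 for every λ ∈ Λ, and with ∫ R j dμ_j = 0 for every j. Then there exists no point λ_c ∈ Λ such that for every j : Fin N, every open neighborhood of λ_c has positive μ_j-measure. -/
/-!
Some outcome `j` has `R j λ_c > 0`. Since `R j ≥ 0` has zero `μ_j`-integral, `R j = 0` holds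
`μ_j`-almost everywhere, and a continuous function vanishing almost everywhere vanishes on the
whole support of the measure, in particular at `λ_c`.
-/

open MeasureTheory

namespace MeasureTheory.Measure

variable {X : Type*} [TopologicalSpace X] [MeasurableSpace X] {μ : Measure X} {x : X}

theorem eq_of_ae_eq_of_mem_support {E : Type*} [TopologicalSpace E] [T2Space E] {f g : X → E}
    (hf : Continuous f) (hg : Continuous g) (hfg : f =ᵐ[μ] g) (hx : x ∈ μ.support) :
    f x = g x :=
  support_subset_of_isClosed (isClosed_eq hf hg) hfg hx

theorem eq_zero_of_integral_eq_zero_of_mem_support {f : X → ℝ} (hf : Continuous f)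
    (hf_nonneg : 0 ≤ f) (hf_int : Integrable f μ) (hf_zero : ∫ y, f y ∂μ = 0)
    (hx : x ∈ μ.support) : f x = 0 :=
  eq_of_ae_eq_of_mem_support hf continuous_const
    ((integral_eq_zero_iff_of_nonneg hf_nonneg hf_int).mp hf_zero) hx

end MeasureTheory.Measure

/-- Pointwise (topological-support) form of the PBR lemma: no hidden variable
can lie in the support of all the distributions `μ j`. -/
theorem pbr_pointwise {Λ : Type*} [TopologicalSpace Λ] [MeasurableSpace Λ] [BorelSpace Λ]
    (N : ℕ) (μ : Fin N → Measure Λ) (hμ : ∀ j, IsProbabilityMeasure (μ j))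
    (R : Fin N → Λ → ℝ) (hRcont : ∀ j, Continuous (R j))
    (hRnonneg : ∀ j, ∀ lam : Λ, 0 ≤ R j lam)
    (hRsum : ∀ lam : Λ, ∑ j, R j lam = 1)
    (hBorn : ∀ j, ∫ lam, R j lam ∂(μ j) = 0) :
    ¬ ∃ lam_c : Λ, ∀ j, ∀ U : Set Λ, IsOpen U → lam_c ∈ U → 0 < μ j U := by
  rintro ⟨c, hc⟩
  obtain ⟨j, -, hj⟩ : ∃ j ∈ Finset.univ, (0 : ℝ) < R j c :=
    Finset.exists_lt_of_sum_lt (by simp [hRsum c])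
  have hR_le_one (lam : Λ) : ‖R j lam‖ ≤ 1 := by
    rw [Real.norm_of_nonneg (hRnonneg j lam), ← hRsum lam]
    exact Finset.single_le_sum (fun i _ => hRnonneg i lam) (Finset.mem_univ j)
  have hR_int : Integrable (R j) (μ j) :=
    .of_bound (hRcont j).aestronglyMeasurable 1 (.of_forall hR_le_one)
  have hc_supp : c ∈ (μ j).support := by
    rw [Measure.support_eq_forall_isOpen]
    exact fun U hcU hU => hc j U hU hcU
  exact hj.ne' (Measure.eq_zero_of_integral_eq_zero_of_mem_support (hRcont j) (hRnonneg j)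
    hR_int (hBorn j) hc_supp)
end
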